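/- arXiv:1007.2693 — 3 statements merged into one kernel-verified Lean document; each statement's English description precedes it below -/
import Mathlib

section
/- In the full amalgamation setup, p≤p0 and p≤p1, i.e. p=(A,n,U) extends both p0 and p1 in the ordering of P. -/
noncomputable section

/-- The countable ordinals: the ordinals below `ω₁`. -/
abbrev CtblOrd : Type _ := {o : Ordinal // o < (Cardinal.aleph 1).ord}

/-- A condition `p = ⟨A_p, n_p, U_p⟩`: `A_p` is a finite set of countable ordinals,
`n_p ∈ ω`, and `U_p` is a function from `A_p × n_p` to `𝒫(A_p)` (encoded as a total
function that takes the default value `∅` outside its domain) satisfying (P2) and (P3). -/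
structure Cond where
  /-- the finite set `A_p ⊆ ω₁` -/
  A : Finset CtblOrd
  /-- the natural number `n_p` -/
  n : ℕ
  /-- the function `U_p : A_p × n_p → 𝒫(A_p)` -/
  U : CtblOrd → ℕ → Finset CtblOrd
  default_empty : ∀ α i, ¬(α ∈ A ∧ i < n) → U α i = ∅
  mem_powerset : ∀ α ∈ A, ∀ i < n, U α i ⊆ A
  P2_self : ∀ α ∈ A, ∀ i < n, α ∈ U α i
  P2_mono : ∀ α ∈ A, ∀ i, 1 ≤ i → i < n → U α i ⊆ U α (i - 1)
  P3 : ∀ α ∈ A, ∀ β ∈ A, ∀ i < n, β ∈ U α i → U α i ⊆ U β 0 → β ≤ α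

/-- `Cond.le q p` means `q ≤ p`: clauses (a), (b), (c), (d1), (d2). -/
def Cond.le (q p : Cond) : Prop :=
  p.A ⊆ q.A ∧ p.n ≤ q.n ∧
  (∀ α ∈ p.A, ∀ i < p.n, p.U α i = q.U α i ∩ p.A) ∧
  (∀ α ∈ p.A, ∀ i < p.n, ∀ β ∈ p.A, ∀ j < p.n,
    p.U α i ∩ p.U β j = ∅ → q.U α i ∩ q.U β j = ∅) ∧
  (∀ α ∈ p.A, ∀ i < p.n, ∀ β ∈ p.A, ∀ j < p.n,
    p.U α i ⊆ p.U β j → q.U α i ⊆ q.U β j)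

/-- `p0` and `p1` are twins with twin function `σ`: `n₀ = n₁`, `|A₀| = |A₁|`, `σ` is the
(unique) order preserving bijection from `A₀` onto `A₁`, (I1) `σ` is the identity on
`A₀ ∩ A₁`, and (I2) `U₁(σ(α), i) = σ''U₀(α, i)` for all `α ∈ A₀`, `i < n₀`. -/
def Twins (p0 p1 : Cond) (σ : CtblOrd → CtblOrd) : Prop :=
  p0.n = p1.n ∧ p0.A.card = p1.A.card ∧
  p0.A.image σ = p1.A ∧
  (∀ α ∈ p0.A, ∀ β ∈ p0.A, α < β → σ α < σ β) ∧
  (∀ δ ∈ p0.A ∩ p1.A, σ δ = δ) ∧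
  (∀ α ∈ p0.A, ∀ i < p0.n, p1.U (σ α) i = (p0.U α i).image σ)

/-- The triple `⟨A, n, U⟩` extends the condition `p` in the ordering of `P`:
clauses (a), (b), (c), (d1), (d2). -/
def ExtendsTriple (A : Finset CtblOrd) (n : ℕ) (U : CtblOrd → ℕ → Finset CtblOrd)
    (p : Cond) : Prop :=
  p.A ⊆ A ∧ p.n ≤ n ∧
  (∀ α ∈ p.A, ∀ i < p.n, p.U α i = U α i ∩ p.A) ∧
  (∀ α ∈ p.A, ∀ i < p.n, ∀ β ∈ p.A, ∀ j < p.n,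
    p.U α i ∩ p.U β j = ∅ → U α i ∩ U β j = ∅) ∧
  (∀ α ∈ p.A, ∀ i < p.n, ∀ β ∈ p.A, ∀ j < p.n,
    p.U α i ⊆ p.U β j → U α i ⊆ U β j)

/-- `p ≤ p0` and `p ≤ p1`: the triple `p = ⟨A, n, U⟩` extends both `p0` and `p1` in the ordering of `P`. -/
theorem claim_p_le
    (p0 p1 : Cond) (σ : CtblOrd → CtblOrd)
    (htw : Twins p0 p1 σ)
    (hsep1 : ∀ x ∈ p0.A ∩ p1.A, ∀ y ∈ p0.A \ p1.A, x < y)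
    (hsep2 : ∀ y ∈ p0.A \ p1.A, ∀ z ∈ p1.A \ p0.A, y < z)
    (B : Finset CtblOrd)
    (hB : ∀ b ∈ B, b ∉ p0.A ∪ p1.A)
    (hBcard : B.card = (p0.A ∪ p1.A).card * p0.n)
    (ρ : CtblOrd → ℕ → CtblOrd)
    (hρB : ∀ α ∈ p0.A ∪ p1.A, ∀ i < p0.n, ρ α i ∈ B)
    (hρinj : ∀ α ∈ p0.A ∪ p1.A, ∀ α' ∈ p0.A ∪ p1.A, ∀ i < p0.n, ∀ i' < p0.n,
      ρ α i = ρ α' i' → α = α' ∧ i = i')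
    (hρsurj : ∀ b ∈ B, ∃ α ∈ p0.A ∪ p1.A, ∃ i < p0.n, ρ α i = b)
    (ex : CtblOrd → CtblOrd)
    (hex0 : ∀ α ∈ p0.A, ex α = σ α)
    (hex1 : ∀ α ∈ p0.A, ex (σ α) = α)
    (sm : CtblOrd → CtblOrd)
    (hsm0 : ∀ α ∈ p0.A, sm α = α)
    (hsm1 : ∀ α ∈ p0.A, sm (σ α) = α)
    (V0 V1 W0 W1 : CtblOrd → ℕ → Finset CtblOrd)
    (hV0 : ∀ β j x, x ∈ V0 β j ↔
      ∃ α ∈ p0.A, ∃ i < p0.n, ρ α i = x ∧ p0.U α i ⊆ p0.U β j)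
    (hV1 : ∀ β j x, x ∈ V1 β j ↔
      ∃ α ∈ p1.A, ∃ i < p0.n, ρ α i = x ∧ p1.U α i ⊆ p1.U β j)
    (hW0 : ∀ β j x, x ∈ W0 β j ↔
      ∃ α ∈ p1.A, ∃ i < p0.n, ρ α i = x ∧
        ∃ γ ∈ p0.A ∩ p1.A, ∃ l < p0.n, p1.U α i ⊆ p1.U γ l ∧ p0.U γ l ⊆ p0.U β j)
    (hW1 : ∀ β j x, x ∈ W1 β j ↔
      ∃ α ∈ p0.A, ∃ i < p0.n, ρ α i = x ∧
        ∃ γ ∈ p0.A ∩ p1.A, ∃ l < p0.n, p0.U α i ⊆ p0.U γ l ∧ p1.U γ l ⊆ p1.U β j)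
    (U' : CtblOrd → ℕ → Finset CtblOrd)
    (hU'0 : ∀ β ∈ p0.A, ∀ j < p0.n,
      U' β j = p0.U β j ∪ p1.U (ex β) j ∪ V0 β j ∪ W0 β j)
    (hU'1 : ∀ β ∈ p1.A, ∀ j < p0.n,
      U' β j = p1.U β j ∪ p0.U (ex β) j ∪ V1 β j ∪ W1 β j)
    (hU'B : ∀ α ∈ p0.A ∪ p1.A, ∀ i < p0.n, ∀ j < p0.n, U' (ρ α i) j = {ρ α i})
    (ξ0 ξ1 : CtblOrd) (hξ0 : ξ0 ∈ p0.A \ p1.A) (hξ1 : ξ1 = σ ξ0)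
    (k m : ℕ) (hkm : k < m) (hmn : m < p0.n)
    (U : CtblOrd → ℕ → Finset CtblOrd)
    (hUyes : ∀ z ∈ (p0.A ∪ p1.A) ∪ B, ∀ j < p0.n,
      z ∈ p0.A → p0.U ξ0 k ⊆ p0.U z j → U z j = U' z j ∪ U' ξ1 k)
    (hUno : ∀ z ∈ (p0.A ∪ p1.A) ∪ B, ∀ j < p0.n,
      ¬(z ∈ p0.A ∧ p0.U ξ0 k ⊆ p0.U z j) → U z j = U' z j)
    :
    ExtendsTriple ((p0.A ∪ p1.A) ∪ B) p0.n U p0 ∧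
    ExtendsTriple ((p0.A ∪ p1.A) ∪ B) p0.n U p1 := by
  classical
  obtain ⟨hn', hcard, himg, hmonoσ, hfixσ, hI2⟩ := htw
  have hn : p1.n = p0.n := hn'.symm
  have hk : k < p0.n := hkm.trans hmn
  have hσA : ∀ α ∈ p0.A, σ α ∈ p1.A := fun α hα => himg ▸ Finset.mem_image_of_mem σ hα
  have hσinj : ∀ α ∈ p0.A, ∀ β ∈ p0.A, σ α = σ β → α = β := by
    intro α hα β hβ h
    rcases lt_trichotomy α β with h' | h' | h'
    · exact absurd h (ne_of_lt (hmonoσ α hα β hβ h'))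
    · exact h'
    · exact absurd h.symm (ne_of_lt (hmonoσ β hβ α hα h'))
  have hσfixrev : ∀ α ∈ p0.A, σ α ∈ p0.A → σ α = α := by
    intro α hα h
    have hd : σ (σ α) = σ α := hfixσ (σ α) (Finset.mem_inter.2 ⟨h, hσA α hα⟩)
    exact hσinj (σ α) h α hα hd
  have hpre : ∀ z ∈ p1.A, ex z ∈ p0.A ∧ σ (ex z) = z := by
    intro z hz
    rw [← himg] at hz
    obtain ⟨a, ha, rfl⟩ := Finset.mem_image.1 hz
    rw [hex1 a ha]
    exact ⟨ha, rfl⟩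
  set T : CtblOrd → ℕ → Finset CtblOrd :=
    fun z i => if z ∈ p0.A then p0.U z i else p0.U (ex z) i with hTdef
  have hT0 : ∀ z ∈ p0.A, ∀ i, T z i = p0.U z i := by
    intro z hz i; simp only [hTdef, if_pos hz]
  have hT1 : ∀ z, z ∉ p0.A → ∀ i, T z i = p0.U (ex z) i := by
    intro z hz i; simp only [hTdef, if_neg hz]
  have hTsub : ∀ z ∈ p0.A ∪ p1.A, ∀ i < p0.n, T z i ⊆ p0.A := by
    intro z hz i hi
    by_cases h0 : z ∈ p0.A
    · rw [hT0 z h0]; exact p0.mem_powerset z h0 i hi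
    · have hz1 : z ∈ p1.A := (Finset.mem_union.1 hz).resolve_left h0
      rw [hT1 z h0]
      exact p0.mem_powerset _ (hpre z hz1).1 i hi
  have hTne : ∀ z ∈ p0.A ∪ p1.A, ∀ i < p0.n, (T z i).Nonempty := by
    intro z hz i hi
    by_cases h0 : z ∈ p0.A
    · exact ⟨z, (hT0 z h0 i) ▸ p0.P2_self z h0 i hi⟩
    · have hz1 := (Finset.mem_union.1 hz).resolve_left h0
      exact ⟨ex z, (hT1 z h0 i) ▸ p0.P2_self _ (hpre z hz1).1 i hi⟩
  have himgrefl : ∀ X Y : Finset CtblOrd, X ⊆ p0.A → Y ⊆ p0.A →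
      X.image σ ⊆ Y.image σ → X ⊆ Y := by
    intro X Y hX hY h x hx
    obtain ⟨y, hy, hxy⟩ := Finset.mem_image.1 (h (Finset.mem_image_of_mem σ hx))
    rw [hσinj y (hY hy) x (hX hx) hxy] at hy
    exact hy
  have hfixmem : ∀ X : Finset CtblOrd, X ⊆ p0.A → ∀ x ∈ X.image σ, x ∈ p0.A → x ∈ X := by
    intro X hX x hx hx0
    obtain ⟨y, hy, rfl⟩ := Finset.mem_image.1 hx
    rw [hσfixrev y (hX hy) hx0]
    exact hy
  have hmemimg : ∀ X : Finset CtblOrd, X ⊆ p0.A → ∀ x ∈ X, x ∈ p1.A → x ∈ X.image σ := by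
    intro X hX x hx hx1
    have h : σ x = x := hfixσ x (Finset.mem_inter.2 ⟨hX hx, hx1⟩)
    exact Finset.mem_image.2 ⟨x, hx, h⟩
  have hST : ∀ z ∈ p1.A, ∀ i < p0.n, p1.U z i = (T z i).image σ := by
    intro z hz i hi
    by_cases h0 : z ∈ p0.A
    · rw [hT0 z h0, ← hI2 z h0 i hi, hfixσ z (Finset.mem_inter.2 ⟨h0, hz⟩)]
    · obtain ⟨ha, hσa⟩ := hpre z hz
      rw [hT1 z h0, ← hI2 (ex z) ha i hi, hσa]
  have hSU0 : ∀ z ∈ p0.A, ∀ i < p0.n, p1.U (ex z) i = (T z i).image σ := by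
    intro z hz i hi
    rw [hex0 z hz, hI2 z hz i hi, hT0 z hz]
  have hTex : ∀ z ∈ p1.A, ∀ i, p0.U (ex z) i = T z i := by
    intro z hz i
    by_cases h0 : z ∈ p0.A
    · rw [hT0 z h0, hex0 z h0, hfixσ z (Finset.mem_inter.2 ⟨h0, hz⟩)]
    · rw [hT1 z h0]
  have hne : ∀ (X Y : Finset CtblOrd) (x : CtblOrd), X ∩ Y = ∅ → x ∈ X → x ∈ Y → False := by
    intro X Y x h h1 h2
    have hm : x ∈ X ∩ Y := Finset.mem_inter.2 ⟨h1, h2⟩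
    rw [h] at hm; exact absurd hm (Finset.notMem_empty _)
  have hmk : ∀ (X Y : Finset CtblOrd), (∀ x, x ∈ X → x ∈ Y → False) → X ∩ Y = ∅ := by
    intro X Y h
    apply Finset.eq_empty_of_forall_notMem
    intro x hx
    exact h x (Finset.mem_inter.1 hx).1 (Finset.mem_inter.1 hx).2
  -- structural upper bound on U'
  have hU'sub : ∀ z ∈ p0.A ∪ p1.A, ∀ i < p0.n, ∀ x ∈ U' z i,
      x ∈ T z i ∨ x ∈ (T z i).image σ ∨
      (x ∈ B ∧ ∃ α ∈ p0.A ∪ p1.A, ∃ i' < p0.n, ρ α i' = x ∧ T α i' ⊆ T z i) := by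
    intro z hz i hi x hx
    by_cases h0 : z ∈ p0.A
    · rw [hU'0 z h0 i hi] at hx
      rcases Finset.mem_union.1 hx with hx | hxW
      · rcases Finset.mem_union.1 hx with hx | hxV
        · rcases Finset.mem_union.1 hx with hx0 | hx1
          · left; rw [hT0 z h0]; exact hx0
          · right; left; rw [← hSU0 z h0 i hi]; exact hx1
        · obtain ⟨α, hα, i', hi', hρ, hsub⟩ := (hV0 z i x).1 hxV
          have hαu : α ∈ p0.A ∪ p1.A := Finset.mem_union_left _ hα
          refine Or.inr (Or.inr ⟨hρ ▸ hρB α hαu i' hi', α, hαu, i', hi', hρ, ?_⟩)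
          rw [hT0 α hα, hT0 z h0]; exact hsub
      · obtain ⟨α, hα, i', hi', hρ, γ, hγ, l, hl, h1, h2⟩ := (hW0 z i x).1 hxW
        have hγ0 := (Finset.mem_inter.1 hγ).1
        have hαu : α ∈ p0.A ∪ p1.A := Finset.mem_union_right _ hα
        refine Or.inr (Or.inr ⟨hρ ▸ hρB α hαu i' hi', α, hαu, i', hi', hρ, ?_⟩)
        have h1' : (T α i').image σ ⊆ (p0.U γ l).image σ := by
          rw [← hST α hα i' hi', ← hI2 γ hγ0 l hl, hfixσ γ hγ]
          exact h1
        have h1'' := himgrefl (T α i') (p0.U γ l) (hTsub α hαu i' hi')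
          (p0.mem_powerset γ hγ0 l hl) h1'
        rw [hT0 z h0]
        exact h1''.trans h2
    · have hz1 : z ∈ p1.A := (Finset.mem_union.1 hz).resolve_left h0
      rw [hU'1 z hz1 i hi] at hx
      rcases Finset.mem_union.1 hx with hx | hxW
      · rcases Finset.mem_union.1 hx with hx | hxV
        · rcases Finset.mem_union.1 hx with hx1 | hx0
          · right; left; rw [← hST z hz1 i hi]; exact hx1
          · left; rw [← hTex z hz1 i]; exact hx0
        · obtain ⟨α, hα, i', hi', hρ, hsub⟩ := (hV1 z i x).1 hxV
          have hαu : α ∈ p0.A ∪ p1.A := Finset.mem_union_right _ hα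
          refine Or.inr (Or.inr ⟨hρ ▸ hρB α hαu i' hi', α, hαu, i', hi', hρ, ?_⟩)
          refine himgrefl (T α i') (T z i) (hTsub α hαu i' hi') (hTsub z hz i hi) ?_
          rw [← hST α hα i' hi', ← hST z hz1 i hi]
          exact hsub
      · obtain ⟨α, hα, i', hi', hρ, γ, hγ, l, hl, h1, h2⟩ := (hW1 z i x).1 hxW
        have hγ0 := (Finset.mem_inter.1 hγ).1
        have hαu : α ∈ p0.A ∪ p1.A := Finset.mem_union_left _ hα
        refine Or.inr (Or.inr ⟨hρ ▸ hρB α hαu i' hi', α, hαu, i', hi', hρ, ?_⟩)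
        have h2' : (p0.U γ l).image σ ⊆ (T z i).image σ := by
          rw [← hI2 γ hγ0 l hl, hfixσ γ hγ, ← hST z hz1 i hi]
          exact h2
        have h2'' := himgrefl (p0.U γ l) (T z i) (p0.mem_powerset γ hγ0 l hl)
          (hTsub z hz i hi) h2'
        rw [hT0 α hα]
        exact h1.trans h2''
  have hintA0 : ∀ z ∈ p0.A ∪ p1.A, ∀ i < p0.n, ∀ x ∈ U' z i, x ∈ p0.A → x ∈ T z i := by
    intro z hz i hi x hx hx0
    rcases hU'sub z hz i hi x hx with h | h | h
    · exact h
    · exact hfixmem (T z i) (hTsub z hz i hi) x h hx0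
    · exact absurd (Finset.mem_union_left _ hx0) (hB x h.1)
  have hintA1 : ∀ z ∈ p0.A ∪ p1.A, ∀ i < p0.n, ∀ x ∈ U' z i, x ∈ p1.A →
      x ∈ (T z i).image σ := by
    intro z hz i hi x hx hx1
    rcases hU'sub z hz i hi x hx with h | h | h
    · exact hmemimg (T z i) (hTsub z hz i hi) x h hx1
    · exact h
    · exact absurd (Finset.mem_union_right _ hx1) (hB x h.1)
  -- master disjointness
  have hdisj : ∀ z ∈ p0.A ∪ p1.A, ∀ i < p0.n, ∀ w ∈ p0.A ∪ p1.A, ∀ j < p0.n,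
      T z i ∩ T w j = ∅ → U' z i ∩ U' w j = ∅ := by
    intro z hz i hi w hw j hj hTd
    apply hmk
    intro x hx1 hx2
    rcases hU'sub z hz i hi x hx1 with h | h | h
    · exact hne _ _ x hTd h (hintA0 w hw j hj x hx2 (hTsub z hz i hi h))
    · have hx1' : x ∈ p1.A := by
        obtain ⟨y, hy, rfl⟩ := Finset.mem_image.1 h
        exact hσA y (hTsub z hz i hi hy)
      have h2 := hintA1 w hw j hj x hx2 hx1'
      obtain ⟨y, hy, hxy⟩ := Finset.mem_image.1 h
      obtain ⟨y', hy', hxy'⟩ := Finset.mem_image.1 h2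
      have hyy : y = y' := hσinj y (hTsub z hz i hi hy) y' (hTsub w hw j hj hy')
        (hxy.trans hxy'.symm)
      exact hne _ _ y' hTd (hyy ▸ hy) hy'
    · obtain ⟨hxB, α, hα, i', hi', hρ, hTz⟩ := h
      rcases hU'sub w hw j hj x hx2 with h' | h' | h'
      · exact absurd (Finset.mem_union_left _ (hTsub w hw j hj h')) (hB x hxB)
      · obtain ⟨y, hy, rfl⟩ := Finset.mem_image.1 h'
        exact absurd (Finset.mem_union_right _ (hσA y (hTsub w hw j hj hy))) (hB _ hxB)
      · obtain ⟨_, α', hα', i'', hi'', hρ', hTw⟩ := h'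
        obtain ⟨he1, he2⟩ := hρinj α hα α' hα' i' hi' i'' hi'' (hρ.trans hρ'.symm)
        obtain ⟨y, hy⟩ := hTne α hα i' hi'
        have hy' : y ∈ T α' i'' := by rw [← he1, ← he2]; exact hy
        exact hne _ _ y hTd (hTz hy) (hTw hy')
  -- monotonicity on side 0
  have hmono0 : ∀ z ∈ p0.A, ∀ i < p0.n, ∀ w ∈ p0.A, ∀ j < p0.n,
      p0.U z i ⊆ p0.U w j → U' z i ⊆ U' w j := by
    intro z hzA i hi w hwA j hj hsub
    rw [hU'0 z hzA i hi, hU'0 w hwA j hj]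
    intro x hx
    rcases Finset.mem_union.1 hx with hx | hxW
    · rcases Finset.mem_union.1 hx with hx | hxV
      · rcases Finset.mem_union.1 hx with hx0 | hx1
        · exact Finset.mem_union_left _ (Finset.mem_union_left _
            (Finset.mem_union_left _ (hsub hx0)))
        · refine Finset.mem_union_left _ (Finset.mem_union_left _
            (Finset.mem_union_right _ ?_))
          rw [hex0 z hzA, hI2 z hzA i hi] at hx1
          rw [hex0 w hwA, hI2 w hwA j hj]
          exact Finset.image_subset_image hsub hx1
      · refine Finset.mem_union_left _ (Finset.mem_union_right _ ?_)
        obtain ⟨α, hα, i', hi', hρ, hs⟩ := (hV0 z i x).1 hxV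
        exact (hV0 w j x).2 ⟨α, hα, i', hi', hρ, hs.trans hsub⟩
    · refine Finset.mem_union_right _ ?_
      obtain ⟨α, hα, i', hi', hρ, γ, hγ, l, hl, h1, h2⟩ := (hW0 z i x).1 hxW
      exact (hW0 w j x).2 ⟨α, hα, i', hi', hρ, γ, hγ, l, hl, h1, h2.trans hsub⟩
  -- monotonicity on side 1
  have hmono1 : ∀ z ∈ p1.A, ∀ i < p0.n, ∀ w ∈ p1.A, ∀ j < p0.n,
      p1.U z i ⊆ p1.U w j → U' z i ⊆ U' w j := by
    intro z hzA i hi w hwA j hj hsub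
    have hzu : z ∈ p0.A ∪ p1.A := Finset.mem_union_right _ hzA
    have hwu : w ∈ p0.A ∪ p1.A := Finset.mem_union_right _ hwA
    have hTsub' : T z i ⊆ T w j := by
      refine himgrefl (T z i) (T w j) (hTsub z hzu i hi) (hTsub w hwu j hj) ?_
      rw [← hST z hzA i hi, ← hST w hwA j hj]
      exact hsub
    rw [hU'1 z hzA i hi, hU'1 w hwA j hj]
    intro x hx
    rcases Finset.mem_union.1 hx with hx | hxW
    · rcases Finset.mem_union.1 hx with hx | hxV
      · rcases Finset.mem_union.1 hx with hx1 | hx0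
        · exact Finset.mem_union_left _ (Finset.mem_union_left _
            (Finset.mem_union_left _ (hsub hx1)))
        · refine Finset.mem_union_left _ (Finset.mem_union_left _
            (Finset.mem_union_right _ ?_))
          rw [hTex z hzA i] at hx0
          rw [hTex w hwA j]
          exact hTsub' hx0
      · refine Finset.mem_union_left _ (Finset.mem_union_right _ ?_)
        obtain ⟨α, hα, i', hi', hρ, hs⟩ := (hV1 z i x).1 hxV
        exact (hV1 w j x).2 ⟨α, hα, i', hi', hρ, hs.trans hsub⟩
    · refine Finset.mem_union_right _ ?_
      obtain ⟨α, hα, i', hi', hρ, γ, hγ, l, hl, h1, h2⟩ := (hW1 z i x).1 hxW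
      exact (hW1 w j x).2 ⟨α, hα, i', hi', hρ, γ, hγ, l, hl, h1, h2.trans hsub⟩
  -- T-disjointness from side-1 disjointness
  have hTd1 : ∀ z ∈ p1.A, ∀ i < p0.n, ∀ w ∈ p1.A, ∀ j < p0.n,
      p1.U z i ∩ p1.U w j = ∅ → T z i ∩ T w j = ∅ := by
    intro z hz i hi w hw j hj h
    apply hmk
    intro y hy1 hy2
    refine hne _ _ (σ y) h ?_ ?_
    · rw [hST z hz i hi]; exact Finset.mem_image_of_mem σ hy1
    · rw [hST w hw j hj]; exact Finset.mem_image_of_mem σ hy2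
  -- facts about ξ0, ξ1
  have hξ0A : ξ0 ∈ p0.A := (Finset.mem_sdiff.1 hξ0).1
  have hξ0n1 : ξ0 ∉ p1.A := (Finset.mem_sdiff.1 hξ0).2
  have hξ1A1 : ξ1 ∈ p1.A := by rw [hξ1]; exact hσA ξ0 hξ0A
  have hξ1n0 : ξ1 ∉ p0.A := by
    intro h
    rw [hξ1] at h
    have hfix := hσfixrev ξ0 hξ0A h
    apply hξ0n1
    rw [← hfix, ← hξ1]
    exact hξ1A1
  have hξ1u : ξ1 ∈ p0.A ∪ p1.A := Finset.mem_union_right _ hξ1A1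
  have hTξ1 : ∀ i, T ξ1 i = p0.U ξ0 i := by
    intro i
    rw [hT1 ξ1 hξ1n0, hξ1, hex1 ξ0 hξ0A]
  have hSξ1 : p1.U ξ1 k = (p0.U ξ0 k).image σ := by
    rw [hξ1]; exact hI2 ξ0 hξ0A k hk
  have hAuu : ∀ z ∈ p0.A ∪ p1.A, z ∈ (p0.A ∪ p1.A) ∪ B :=
    fun z hz => Finset.mem_union_left _ hz
  have hUge : ∀ z ∈ p0.A ∪ p1.A, ∀ j < p0.n, U' z j ⊆ U z j := by
    intro z hz j hj
    by_cases h : z ∈ p0.A ∧ p0.U ξ0 k ⊆ p0.U z j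
    · rw [hUyes z (hAuu z hz) j hj h.1 h.2]; exact Finset.subset_union_left
    · rw [hUno z (hAuu z hz) j hj h]
  -- clause (c) for p0
  have hc0 : ∀ α ∈ p0.A, ∀ i < p0.n, p0.U α i = U α i ∩ p0.A := by
    intro α hα i hi
    have hαu : α ∈ p0.A ∪ p1.A := Finset.mem_union_left _ hα
    apply Finset.Subset.antisymm
    · intro x hx
      refine Finset.mem_inter.2 ⟨hUge α hαu i hi ?_, p0.mem_powerset α hα i hi hx⟩
      rw [hU'0 α hα i hi]
      exact Finset.mem_union_left _ (Finset.mem_union_left _ (Finset.mem_union_left _ hx))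
    · intro x hx
      obtain ⟨hxU, hx0⟩ := Finset.mem_inter.1 hx
      by_cases hfire : p0.U ξ0 k ⊆ p0.U α i
      · rw [hUyes α (hAuu α hαu) i hi hα hfire] at hxU
        rcases Finset.mem_union.1 hxU with h | h
        · rw [← hT0 α hα i]; exact hintA0 α hαu i hi x h hx0
        · have hm := hintA0 ξ1 hξ1u k hk x h hx0
          rw [hTξ1 k] at hm
          exact hfire hm
      · rw [hUno α (hAuu α hαu) i hi (fun hh => hfire hh.2)] at hxU
        rw [← hT0 α hα i]; exact hintA0 α hαu i hi x hxU hx0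
  -- clause (c) for p1
  have hc1 : ∀ α ∈ p1.A, ∀ i < p0.n, p1.U α i = U α i ∩ p1.A := by
    intro α hα i hi
    have hαu : α ∈ p0.A ∪ p1.A := Finset.mem_union_right _ hα
    apply Finset.Subset.antisymm
    · intro x hx
      refine Finset.mem_inter.2 ⟨hUge α hαu i hi ?_,
        p1.mem_powerset α hα i (lt_of_lt_of_eq hi hn.symm) hx⟩
      rw [hU'1 α hα i hi]
      exact Finset.mem_union_left _ (Finset.mem_union_left _ (Finset.mem_union_left _ hx))
    · intro x hx
      obtain ⟨hxU, hx1⟩ := Finset.mem_inter.1 hx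
      by_cases hfire : α ∈ p0.A ∧ p0.U ξ0 k ⊆ p0.U α i
      · rw [hUyes α (hAuu α hαu) i hi hfire.1 hfire.2] at hxU
        rcases Finset.mem_union.1 hxU with h | h
        · have hm := hintA1 α hαu i hi x h hx1
          rw [← hST α hα i hi] at hm; exact hm
        · have hm := hintA1 ξ1 hξ1u k hk x h hx1
          rw [hTξ1 k] at hm
          have h2 : x ∈ (p0.U α i).image σ := Finset.image_subset_image hfire.2 hm
          have e1 := hI2 α hfire.1 i hi
          rw [hfixσ α (Finset.mem_inter.2 ⟨hfire.1, hα⟩)] at e1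
          rw [e1]; exact h2
      · rw [hUno α (hAuu α hαu) i hi hfire] at hxU
        have hm := hintA1 α hαu i hi x hxU hx1
        rw [← hST α hα i hi] at hm; exact hm
  -- clause (d1) for p0
  have hd1_0 : ∀ α ∈ p0.A, ∀ i < p0.n, ∀ β ∈ p0.A, ∀ j < p0.n,
      p0.U α i ∩ p0.U β j = ∅ → U α i ∩ U β j = ∅ := by
    intro α hα i hi β hβ j hj hdis
    have hαu : α ∈ p0.A ∪ p1.A := Finset.mem_union_left _ hα
    have hβu : β ∈ p0.A ∪ p1.A := Finset.mem_union_left _ hβ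
    have hdT : T α i ∩ T β j = ∅ := by rw [hT0 α hα i, hT0 β hβ j]; exact hdis
    have hd' : U' α i ∩ U' β j = ∅ := hdisj α hαu i hi β hβu j hj hdT
    by_cases hfα : p0.U ξ0 k ⊆ p0.U α i
    · by_cases hfβ : p0.U ξ0 k ⊆ p0.U β j
      · exact absurd hdis (fun hd => hne _ _ ξ0 hd (hfα (p0.P2_self ξ0 hξ0A k hk))
          (hfβ (p0.P2_self ξ0 hξ0A k hk)))
      · rw [hUyes α (hAuu α hαu) i hi hα hfα, hUno β (hAuu β hβu) j hj (fun hh => hfβ hh.2)]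
        have hdξ : U' ξ1 k ∩ U' β j = ∅ := by
          refine hdisj ξ1 hξ1u k hk β hβu j hj ?_
          rw [hTξ1 k, hT0 β hβ j]
          exact hmk _ _ (fun y h1 h2 => hne _ _ y hdis (hfα h1) h2)
        rw [Finset.union_inter_distrib_right, hd', hdξ, Finset.union_empty]
    · by_cases hfβ : p0.U ξ0 k ⊆ p0.U β j
      · rw [hUno α (hAuu α hαu) i hi (fun hh => hfα hh.2), hUyes β (hAuu β hβu) j hj hβ hfβ]
        have hdξ : U' α i ∩ U' ξ1 k = ∅ := by
          refine hdisj α hαu i hi ξ1 hξ1u k hk ?_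
          rw [hTξ1 k, hT0 α hα i]
          exact hmk _ _ (fun y h1 h2 => hne _ _ y hdis h1 (hfβ h2))
        rw [Finset.inter_union_distrib_left, hd', hdξ, Finset.union_empty]
      · rw [hUno α (hAuu α hαu) i hi (fun hh => hfα hh.2),
          hUno β (hAuu β hβu) j hj (fun hh => hfβ hh.2)]
        exact hd'
  -- clause (d1) for p1
  have hd1_1 : ∀ α ∈ p1.A, ∀ i < p0.n, ∀ β ∈ p1.A, ∀ j < p0.n,
      p1.U α i ∩ p1.U β j = ∅ → U α i ∩ U β j = ∅ := by
    intro α hα i hi β hβ j hj hdis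
    have hαu : α ∈ p0.A ∪ p1.A := Finset.mem_union_right _ hα
    have hβu : β ∈ p0.A ∪ p1.A := Finset.mem_union_right _ hβ
    have hdT : T α i ∩ T β j = ∅ := hTd1 α hα i hi β hβ j hj hdis
    have hd' : U' α i ∩ U' β j = ∅ := hdisj α hαu i hi β hβu j hj hdT
    by_cases hfα : α ∈ p0.A ∧ p0.U ξ0 k ⊆ p0.U α i
    · by_cases hfβ : β ∈ p0.A ∧ p0.U ξ0 k ⊆ p0.U β j
      · exfalso
        refine hne _ _ ξ0 hdT ?_ ?_
        · rw [hT0 α hfα.1 i]; exact hfα.2 (p0.P2_self ξ0 hξ0A k hk)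
        · rw [hT0 β hfβ.1 j]; exact hfβ.2 (p0.P2_self ξ0 hξ0A k hk)
      · rw [hUyes α (hAuu α hαu) i hi hfα.1 hfα.2, hUno β (hAuu β hβu) j hj hfβ]
        have hdξ : U' ξ1 k ∩ U' β j = ∅ := by
          refine hdisj ξ1 hξ1u k hk β hβu j hj ?_
          rw [hTξ1 k]
          refine hmk _ _ (fun y h1 h2 => hne _ _ y hdT ?_ h2)
          rw [hT0 α hfα.1 i]
          exact hfα.2 h1
        rw [Finset.union_inter_distrib_right, hd', hdξ, Finset.union_empty]
    · by_cases hfβ : β ∈ p0.A ∧ p0.U ξ0 k ⊆ p0.U β j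
      · rw [hUno α (hAuu α hαu) i hi hfα, hUyes β (hAuu β hβu) j hj hfβ.1 hfβ.2]
        have hdξ : U' α i ∩ U' ξ1 k = ∅ := by
          refine hdisj α hαu i hi ξ1 hξ1u k hk ?_
          rw [hTξ1 k]
          refine hmk _ _ (fun y h1 h2 => hne _ _ y hdT h1 ?_)
          rw [hT0 β hfβ.1 j]
          exact hfβ.2 h2
        rw [Finset.inter_union_distrib_left, hd', hdξ, Finset.union_empty]
      · rw [hUno α (hAuu α hαu) i hi hfα, hUno β (hAuu β hβu) j hj hfβ]
        exact hd'
  -- clause (d2) for p0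
  have hd2_0 : ∀ α ∈ p0.A, ∀ i < p0.n, ∀ β ∈ p0.A, ∀ j < p0.n,
      p0.U α i ⊆ p0.U β j → U α i ⊆ U β j := by
    intro α hα i hi β hβ j hj hsub
    have hαu : α ∈ p0.A ∪ p1.A := Finset.mem_union_left _ hα
    have hβu : β ∈ p0.A ∪ p1.A := Finset.mem_union_left _ hβ
    have hm := hmono0 α hα i hi β hβ j hj hsub
    by_cases hfα : p0.U ξ0 k ⊆ p0.U α i
    · rw [hUyes α (hAuu α hαu) i hi hα hfα, hUyes β (hAuu β hβu) j hj hβ (hfα.trans hsub)]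
      exact Finset.union_subset_union hm (subset_refl _)
    · rw [hUno α (hAuu α hαu) i hi (fun hh => hfα hh.2)]
      exact hm.trans (hUge β hβu j hj)
  -- clause (d2) for p1
  have hd2_1 : ∀ α ∈ p1.A, ∀ i < p0.n, ∀ β ∈ p1.A, ∀ j < p0.n,
      p1.U α i ⊆ p1.U β j → U α i ⊆ U β j := by
    intro α hα i hi β hβ j hj hsub
    have hαu : α ∈ p0.A ∪ p1.A := Finset.mem_union_right _ hα
    have hβu : β ∈ p0.A ∪ p1.A := Finset.mem_union_right _ hβ
    have hm := hmono1 α hα i hi β hβ j hj hsub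
    by_cases hfα : α ∈ p0.A ∧ p0.U ξ0 k ⊆ p0.U α i
    · rw [hUyes α (hAuu α hαu) i hi hfα.1 hfα.2]
      have hξsub : p1.U ξ1 k ⊆ p1.U α i := by
        have e1 := hI2 α hfα.1 i hi
        rw [hfixσ α (Finset.mem_inter.2 ⟨hfα.1, hα⟩)] at e1
        rw [e1, hSξ1]
        exact Finset.image_subset_image hfα.2
      have hm2 := hmono1 ξ1 hξ1A1 k hk β hβ j hj (hξsub.trans hsub)
      exact (Finset.union_subset (hm.trans (hUge β hβu j hj)) (hm2.trans (hUge β hβu j hj)))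
    · rw [hUno α (hAuu α hαu) i hi hfα]
      exact hm.trans (hUge β hβu j hj)
  refine ⟨⟨Finset.Subset.trans Finset.subset_union_left Finset.subset_union_left,
    le_refl _, hc0, hd1_0, hd2_0⟩,
    ⟨Finset.Subset.trans Finset.subset_union_right Finset.subset_union_left,
    hn.le, fun α hα i hi => hc1 α hα i (lt_of_lt_of_eq hi hn),
    fun α hα i hi β hβ j hj => hd1_1 α hα i (lt_of_lt_of_eq hi hn) β hβ j (lt_of_lt_of_eq hj hn),
    fun α hα i hi β hβ j hj => hd2_1 α hα i (lt_of_lt_of_eq hi hn) β hβ j (lt_of_lt_of_eq hj hn)⟩⟩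
end
end

section
/- In the full amalgamation setup, the condition p=(A,n,U) satisfies (*): ξ0∈U(ξ1,m)⊆U(ξ1,k)⊆U(ξ0,k). -/
noncomputable section

/-- General monotonicity from (P2). -/
lemma Umono (p : Cond) (α : CtblOrd) (hα : α ∈ p.A) :
    ∀ i j, i ≤ j → j < p.n → p.U α j ⊆ p.U α i := by
  intro i j hij hj
  induction j with
  | zero =>
    have : i = 0 := Nat.le_zero.mp hij
    subst this; exact subset_rfl
  | succ j ih =>
    rcases Nat.lt_or_ge i (j + 1) with h | h
    · have hstep : p.U α (j + 1) ⊆ p.U α j := by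
        simpa using p.P2_mono α hα (j + 1) (by omega) hj
      exact hstep.trans (ih (by omega) (by omega))
    · have : i = j + 1 := by omega
      subst this; exact subset_rfl

/-- The condition `p = ⟨A, n, U⟩` satisfies `(*)`: `ξ0 ∈ U(ξ1,m) ⊆ U(ξ1,k) ⊆ U(ξ0,k)`. -/
theorem p_satisfies_star
    (p0 p1 : Cond) (σ : CtblOrd → CtblOrd)
    (htw : Twins p0 p1 σ)
    (hsep1 : ∀ x ∈ p0.A ∩ p1.A, ∀ y ∈ p0.A \ p1.A, x < y)
    (hsep2 : ∀ y ∈ p0.A \ p1.A, ∀ z ∈ p1.A \ p0.A, y < z)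
    (B : Finset CtblOrd)
    (hB : ∀ b ∈ B, b ∉ p0.A ∪ p1.A)
    (hBcard : B.card = (p0.A ∪ p1.A).card * p0.n)
    (ρ : CtblOrd → ℕ → CtblOrd)
    (hρB : ∀ α ∈ p0.A ∪ p1.A, ∀ i < p0.n, ρ α i ∈ B)
    (hρinj : ∀ α ∈ p0.A ∪ p1.A, ∀ α' ∈ p0.A ∪ p1.A, ∀ i < p0.n, ∀ i' < p0.n,
      ρ α i = ρ α' i' → α = α' ∧ i = i')
    (hρsurj : ∀ b ∈ B, ∃ α ∈ p0.A ∪ p1.A, ∃ i < p0.n, ρ α i = b)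
    (ex : CtblOrd → CtblOrd)
    (hex0 : ∀ α ∈ p0.A, ex α = σ α)
    (hex1 : ∀ α ∈ p0.A, ex (σ α) = α)
    (sm : CtblOrd → CtblOrd)
    (hsm0 : ∀ α ∈ p0.A, sm α = α)
    (hsm1 : ∀ α ∈ p0.A, sm (σ α) = α)
    (V0 V1 W0 W1 : CtblOrd → ℕ → Finset CtblOrd)
    (hV0 : ∀ β j x, x ∈ V0 β j ↔
      ∃ α ∈ p0.A, ∃ i < p0.n, ρ α i = x ∧ p0.U α i ⊆ p0.U β j)
    (hV1 : ∀ β j x, x ∈ V1 β j ↔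
      ∃ α ∈ p1.A, ∃ i < p0.n, ρ α i = x ∧ p1.U α i ⊆ p1.U β j)
    (hW0 : ∀ β j x, x ∈ W0 β j ↔
      ∃ α ∈ p1.A, ∃ i < p0.n, ρ α i = x ∧
        ∃ γ ∈ p0.A ∩ p1.A, ∃ l < p0.n, p1.U α i ⊆ p1.U γ l ∧ p0.U γ l ⊆ p0.U β j)
    (hW1 : ∀ β j x, x ∈ W1 β j ↔
      ∃ α ∈ p0.A, ∃ i < p0.n, ρ α i = x ∧
        ∃ γ ∈ p0.A ∩ p1.A, ∃ l < p0.n, p0.U α i ⊆ p0.U γ l ∧ p1.U γ l ⊆ p1.U β j)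
    (U' : CtblOrd → ℕ → Finset CtblOrd)
    (hU'0 : ∀ β ∈ p0.A, ∀ j < p0.n,
      U' β j = p0.U β j ∪ p1.U (ex β) j ∪ V0 β j ∪ W0 β j)
    (hU'1 : ∀ β ∈ p1.A, ∀ j < p0.n,
      U' β j = p1.U β j ∪ p0.U (ex β) j ∪ V1 β j ∪ W1 β j)
    (hU'B : ∀ α ∈ p0.A ∪ p1.A, ∀ i < p0.n, ∀ j < p0.n, U' (ρ α i) j = {ρ α i})
    (ξ0 ξ1 : CtblOrd) (hξ0 : ξ0 ∈ p0.A \ p1.A) (hξ1 : ξ1 = σ ξ0)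
    (k m : ℕ) (hkm : k < m) (hmn : m < p0.n)
    (U : CtblOrd → ℕ → Finset CtblOrd)
    (hUyes : ∀ z ∈ (p0.A ∪ p1.A) ∪ B, ∀ j < p0.n,
      z ∈ p0.A → p0.U ξ0 k ⊆ p0.U z j → U z j = U' z j ∪ U' ξ1 k)
    (hUno : ∀ z ∈ (p0.A ∪ p1.A) ∪ B, ∀ j < p0.n,
      ¬(z ∈ p0.A ∧ p0.U ξ0 k ⊆ p0.U z j) → U z j = U' z j)
    :
    ξ0 ∈ U ξ1 m ∧ U ξ1 m ⊆ U ξ1 k ∧ U ξ1 k ⊆ U ξ0 k := by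
  have hn : p0.n = p1.n := htw.1
  have hσimg : p0.A.image σ = p1.A := htw.2.2.1
  have hσmono := htw.2.2.2.1
  have hσid := htw.2.2.2.2.1
  have hξ0A : ξ0 ∈ p0.A := (Finset.mem_sdiff.mp hξ0).1
  have hξ0n1 : ξ0 ∉ p1.A := (Finset.mem_sdiff.mp hξ0).2
  have hξ1A : ξ1 ∈ p1.A := by
    rw [hξ1, ← hσimg]; exact Finset.mem_image_of_mem σ hξ0A
  have hσinj : ∀ a ∈ p0.A, ∀ b ∈ p0.A, σ a = σ b → a = b := by
    intro a ha b hb hab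
    rcases lt_trichotomy a b with h | h | h
    · exact absurd hab (ne_of_lt (hσmono a ha b hb h))
    · exact h
    · exact absurd hab.symm (ne_of_lt (hσmono b hb a ha h))
  have hξ1n0 : ξ1 ∉ p0.A := by
    intro h
    have hfix : σ ξ1 = ξ1 := hσid ξ1 (Finset.mem_inter.mpr ⟨h, hξ1A⟩)
    have : ξ1 = ξ0 := hσinj ξ1 h ξ0 hξ0A (by rw [hfix, hξ1])
    exact hξ0n1 (this ▸ hξ1A)
  have hexξ1 : ex ξ1 = ξ0 := by rw [hξ1]; exact hex1 ξ0 hξ0A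
  have hξ0mem : ξ0 ∈ (p0.A ∪ p1.A) ∪ B :=
    Finset.mem_union_left _ (Finset.mem_union_left _ hξ0A)
  have hξ1mem : ξ1 ∈ (p0.A ∪ p1.A) ∪ B :=
    Finset.mem_union_left _ (Finset.mem_union_right _ hξ1A)
  have hkn : k < p0.n := hkm.trans hmn
  have hUξ1 : ∀ j < p0.n, U ξ1 j = p1.U ξ1 j ∪ p0.U ξ0 j ∪ V1 ξ1 j ∪ W1 ξ1 j := by
    intro j hj
    rw [hUno ξ1 hξ1mem j hj (by intro h; exact hξ1n0 h.1),
      hU'1 ξ1 hξ1A j hj, hexξ1]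
  have hmn1 : m < p1.n := hn ▸ hmn
  have hkn1 : k < p1.n := hn ▸ hkn
  have hmk1 : p1.U ξ1 m ⊆ p1.U ξ1 k := Umono p1 ξ1 hξ1A k m hkm.le hmn1
  have hmk0 : p0.U ξ0 m ⊆ p0.U ξ0 k := Umono p0 ξ0 hξ0A k m hkm.le hmn
  refine ⟨?_, ?_, ?_⟩
  · rw [hUξ1 m hmn]
    have : ξ0 ∈ p0.U ξ0 m := p0.P2_self ξ0 hξ0A m hmn
    simp only [Finset.mem_union]; tauto
  · rw [hUξ1 m hmn, hUξ1 k hkn]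
    intro x hx
    simp only [Finset.mem_union] at hx ⊢
    rcases hx with ((h | h) | h) | h
    · exact Or.inl (Or.inl (Or.inl (hmk1 h)))
    · exact Or.inl (Or.inl (Or.inr (hmk0 h)))
    · refine Or.inl (Or.inr ?_)
      rw [hV1] at h ⊢
      obtain ⟨α, hα, i, hi, hρ, hsub⟩ := h
      exact ⟨α, hα, i, hi, hρ, hsub.trans hmk1⟩
    · refine Or.inr ?_
      rw [hW1] at h ⊢
      obtain ⟨α, hα, i, hi, hρ, γ, hγ, l, hl, h1, h2⟩ := h
      exact ⟨α, hα, i, hi, hρ, γ, hγ, l, hl, h1, h2.trans hmk1⟩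
  · have hUξ0 : U ξ0 k = U' ξ0 k ∪ U' ξ1 k :=
      hUyes ξ0 hξ0mem k hkn hξ0A subset_rfl
    have hU'ξ1 : U ξ1 k = U' ξ1 k :=
      hUno ξ1 hξ1mem k hkn (by intro h; exact hξ1n0 h.1)
    rw [hUξ0, hU'ξ1]
    exact Finset.subset_union_right
end
end

section
/- Every uncountable set S of conditions contains two distinct conditions p0=(A0,n0,U0) and p1=(A1,n1,U1) that are twins and satisfy A0∩A1 < A0∖A1 < A1∖A0. -/
noncomputable section

/-!
Sort the conditions by their *shape*: `n`, `|A|`, and the pattern of `U` read through the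
increasing enumeration of `A`. There are only countably many shapes, so uncountably many
conditions of `S` share one, and among those a condition is determined by its `A`. An
uncountable family of `k`-element subsets of `ω₁` contains `A₀ ≠ A₁` with
`A₀ ∩ A₁ < A₀ \ A₁ < A₁ \ A₀`, by induction on `k`: either uncountably many members share
their least element, which is removed, or, since initial segments of `ω₁` are countable, some
member lies entirely above any given one. The order isomorphism `A₀ ≃o A₁` is then a twin
function: it fixes the common initial segment `A₀ ∩ A₁`, and it carries `U₀` to `U₁` because
it preserves positions in the enumeration and the shapes agree.
-/

open Finset

theorem CtblOrd.countable_Iic (c : CtblOrd) : (Set.Iic c).Countable := by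
  have hc : Order.succ c.1 < (Cardinal.aleph 1).ord :=
    (Cardinal.isSuccLimit_ord (Cardinal.aleph0_le_aleph 1)).succ_lt c.2
  have hIio : (Set.Iio (Order.succ c.1)).Countable := by
    rw [← Cardinal.le_aleph0_iff_set_countable, Cardinal.mk_Iio_ordinal, Cardinal.lift_le_aleph0,
      ← Cardinal.lt_aleph_one_iff]
    exact Cardinal.lt_ord.1 hc
  rw [Order.Iio_succ] at hIio
  exact hIio.preimage Subtype.val_injective

section LinearOrder

variable {α : Type*} [LinearOrder α]

def Staggered (A₀ A₁ : Finset α) : Prop :=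
  (∀ x ∈ A₀ ∩ A₁, ∀ y ∈ A₀ \ A₁, x < y) ∧ (∀ x ∈ A₀ ∩ A₁, ∀ z ∈ A₁ \ A₀, x < z) ∧
    (∀ y ∈ A₀ \ A₁, ∀ z ∈ A₁ \ A₀, y < z)

theorem staggered_of_forall_lt {A₀ A₁ : Finset α} (h : ∀ y ∈ A₀, ∀ z ∈ A₁, y < z) :
    Staggered A₀ A₁ := by
  have hdisj : A₀ ∩ A₁ = ∅ :=
    eq_empty_of_forall_notMem fun x hx => (h x (mem_inter.1 hx).1 x (mem_inter.1 hx).2).false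
  refine ⟨by simp [hdisj], by simp [hdisj], fun y hy z hz => ?_⟩
  exact h y (mem_sdiff.1 hy).1 z (mem_sdiff.1 hz).1

theorem Staggered.insert {A₀ A₁ : Finset α} (h : Staggered A₀ A₁) {δ : α}
    (h₀ : ∀ x ∈ A₀, δ < x) (h₁ : ∀ x ∈ A₁, δ < x) :
    Staggered (insert δ A₀) (insert δ A₁) := by
  have hδ₀ : δ ∉ A₀ := fun hδ => (h₀ δ hδ).false
  have hδ₁ : δ ∉ A₁ := fun hδ => (h₁ δ hδ).false
  rw [Staggered, ← insert_inter_distrib, insert_sdiff_insert, insert_sdiff_insert,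
    sdiff_insert_of_notMem hδ₀, sdiff_insert_of_notMem hδ₁]
  obtain ⟨h_inter₀, h_inter₁, h_diff⟩ := h
  refine ⟨fun x hx y hy => ?_, fun x hx z hz => ?_, h_diff⟩
  · rcases mem_insert.1 hx with rfl | hx
    exacts [h₀ y (mem_sdiff.1 hy).1, h_inter₀ x hx y hy]
  · rcases mem_insert.1 hx with rfl | hx
    exacts [h₁ z (mem_sdiff.1 hz).1, h_inter₁ x hx z hz]

theorem Staggered.filter_lt_eq {A₀ A₁ : Finset α} (h : Staggered A₀ A₁) {δ : α}
    (hδ : δ ∈ A₀ ∩ A₁) : {x ∈ A₀ | x < δ} = {x ∈ A₁ | x < δ} := by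
  ext x
  simp only [mem_filter, and_congr_left_iff]
  refine fun hx => ⟨fun hx₀ => ?_, fun hx₁ => ?_⟩
  · by_contra hx₁
    exact (h.1 δ hδ x (mem_sdiff.2 ⟨hx₀, hx₁⟩)).not_gt hx
  · by_contra hx₀
    exact (h.2.1 δ hδ x (mem_sdiff.2 ⟨hx₁, hx₀⟩)).not_gt hx

section Countable

variable (hα : ∀ c : α, (Set.Iic c).Countable)
include hα

theorem exists_forall_lt_of_countable_isLeast {F : Set (Finset α)} (hF : ¬ F.Countable)
    (hleast : ∀ δ, {A ∈ F | IsLeast (A : Set α) δ}.Countable) (A₀ : Finset α) :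
    ∃ A₁ ∈ F, ∀ y ∈ A₀, ∀ z ∈ A₁, y < z := by
  have hlow : {A ∈ F | ∃ z ∈ A, ∃ y ∈ A₀, z ≤ y} ⊆
      ⋃ y ∈ (A₀ : Set α), ⋃ δ ∈ Set.Iic y, {A ∈ F | IsLeast (A : Set α) δ} := by
    rintro A ⟨hAF, z, hz, y, hy, hzy⟩
    simp only [Set.mem_iUnion]
    exact ⟨y, hy, A.min' ⟨z, hz⟩, (min'_le A z hz).trans hzy, hAF, isLeast_min' A _⟩
  have hcount :=
    (A₀.countable_toSet.biUnion fun y _ => (hα y).biUnion fun δ _ => hleast δ).mono hlow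
  obtain ⟨A₁, hA₁F, hA₁⟩ := Set.nonempty_of_not_subset fun hsub : F ⊆ _ => hF (hcount.mono hsub)
  exact ⟨A₁, hA₁F, fun y hy z hz => lt_of_not_ge fun hzy => hA₁ ⟨hA₁F, z, hz, y, hy, hzy⟩⟩

theorem exists_staggered_of_not_countable {k : ℕ} {F : Set (Finset α)} (hk : ∀ A ∈ F, #A = k)
    (hF : ¬ F.Countable) : ∃ A₀ ∈ F, ∃ A₁ ∈ F, A₀ ≠ A₁ ∧ Staggered A₀ A₁ := by
  induction k generalizing F with
  | zero =>
    refine absurd ((Set.countable_singleton ∅).mono fun A hA => ?_) hF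
    exact card_eq_zero.1 (hk A hA)
  | succ k ih =>
    by_cases hleast : ∀ δ, {A ∈ F | IsLeast (A : Set α) δ}.Countable
    · obtain ⟨A₀, hA₀F⟩ := Set.Infinite.nonempty fun h => hF h.countable
      obtain ⟨y, hy⟩ : A₀.Nonempty := card_pos.1 (by simp [hk A₀ hA₀F])
      obtain ⟨A₁, hA₁F, hlt⟩ := exists_forall_lt_of_countable_isLeast hα hF hleast A₀
      exact ⟨A₀, hA₀F, A₁, hA₁F, fun h => (hlt y hy y (h ▸ hy)).false,
        staggered_of_forall_lt hlt⟩
    push Not at hleast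
    obtain ⟨δ, hδ⟩ := hleast
    set G := {A ∈ F | IsLeast (A : Set α) δ}
    have hlt : ∀ A ∈ G, ∀ x ∈ A.erase δ, δ < x := fun A hA x hx =>
      lt_of_le_of_ne (hA.2.2 (mem_of_mem_erase hx)) (ne_of_mem_erase hx).symm
    have hinsert : ∀ A ∈ G, insert δ (A.erase δ) = A := fun A hA => insert_erase hA.2.1
    have hcard : ∀ B ∈ (·.erase δ) '' G, #B = k := by
      rintro _ ⟨A, hA, rfl⟩
      simp [card_erase_of_mem hA.2.1, hk A hA.1]
    have hG : G ⊆ insert δ '' ((·.erase δ) '' G) := fun A hA => ⟨_, ⟨A, hA, rfl⟩, hinsert A hA⟩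
    obtain ⟨_, ⟨A₀, hA₀, rfl⟩, _, ⟨A₁, hA₁, rfl⟩, hne, hstag⟩ :=
      ih hcard fun hc => hδ ((hc.image _).mono hG)
    refine ⟨A₀, hA₀.1, A₁, hA₁.1, fun h => hne (by rw [h]), ?_⟩
    rw [← hinsert A₀ hA₀, ← hinsert A₁ hA₁]
    exact hstag.insert (hlt A₀ hA₀) (hlt A₁ hA₁)

end Countable

def rankIn (s : Finset α) (a : α) : ℕ := #{x ∈ s | x < a}

theorem rankIn_strictMonoOn (s : Finset α) : StrictMonoOn (rankIn s) s := by
  intro a ha b _ hab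
  have hsub : {x ∈ s | x < a} ⊆ {x ∈ s | x < b} := fun x hx => by
    simp only [mem_filter] at hx ⊢
    exact ⟨hx.1, hx.2.trans hab⟩
  refine card_lt_card ⟨hsub, fun hsub => ?_⟩
  exact (mem_filter.1 (hsub (mem_filter.2 ⟨ha, hab⟩))).2.false

theorem rankIn_orderIso {s t : Finset α} (e : s ≃o t) (a : s) : rankIn t (e a) = rankIn s a := by
  refine (card_bij (fun x hx => (e ⟨x, (mem_filter.1 hx).1⟩ : α)) ?_ ?_ ?_).symm
  · intro x hx
    exact mem_filter.2 ⟨(e _).2, e.lt_iff_lt.2 (mem_filter.1 hx).2⟩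
  · intro x hx y hy hxy
    simpa using e.injective (Subtype.ext hxy)
  · intro y hy
    obtain ⟨hyt, hya⟩ := mem_filter.1 hy
    refine ⟨e.symm ⟨y, hyt⟩, mem_filter.2 ⟨(e.symm _).2, ?_⟩, by simp⟩
    exact e.symm_apply_lt.2 hya

def twinMap {s t : Finset α} (e : s ≃o t) (a : α) : α := if h : a ∈ s then e ⟨a, h⟩ else a

variable {s t : Finset α} (e : s ≃o t)

theorem twinMap_of_mem {a : α} (ha : a ∈ s) : twinMap e a = e ⟨a, ha⟩ := dif_pos ha

theorem twinMap_mem {a : α} (ha : a ∈ s) : twinMap e a ∈ t := by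
  rw [twinMap_of_mem e ha]
  exact (e _).2

theorem image_twinMap : s.image (twinMap e) = t := by
  refine Subset.antisymm (fun b hb => ?_) fun b hb => ?_
  · obtain ⟨a, ha, rfl⟩ := mem_image.1 hb
    exact twinMap_mem e ha
  · refine mem_image.2 ⟨e.symm ⟨b, hb⟩, (e.symm _).2, ?_⟩
    rw [twinMap_of_mem e (e.symm _).2]
    simp

theorem twinMap_strictMonoOn : StrictMonoOn (twinMap e) s := by
  intro a ha b hb hab
  rw [twinMap_of_mem e ha, twinMap_of_mem e hb]
  exact e.lt_iff_lt.2 hab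

theorem rankIn_twinMap {a : α} (ha : a ∈ s) : rankIn t (twinMap e a) = rankIn s a := by
  rw [twinMap_of_mem e ha, rankIn_orderIso]

theorem twinMap_eq_self_of_filter_lt_eq {a : α} (ha : a ∈ s ∩ t)
    (h : {x ∈ s | x < a} = {x ∈ t | x < a}) : twinMap e a = a := by
  have ⟨has, hat⟩ := mem_inter.1 ha
  refine (rankIn_strictMonoOn t).injOn (twinMap_mem e has) hat ?_
  rw [rankIn_twinMap e has, rankIn, rankIn, h]

end LinearOrder

namespace Cond

theorem mem_A_and_lt_n_of_mem_U {p : Cond} {a b : CtblOrd} {i : ℕ} (h : b ∈ p.U a i) :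
    a ∈ p.A ∧ i < p.n := by
  by_contra hai
  simp [p.default_empty a i hai] at h

theorem mem_A_of_mem_U {p : Cond} {a b : CtblOrd} {i : ℕ} (h : b ∈ p.U a i) : b ∈ p.A :=
  p.mem_powerset a (mem_A_and_lt_n_of_mem_U h).1 i (mem_A_and_lt_n_of_mem_U h).2 h

def shape (p : Cond) : ℕ × ℕ × Finset (ℕ × ℕ × ℕ) :=
  (p.n, #p.A, {x ∈ p.A ×ˢ range p.n ×ˢ p.A | x.2.2 ∈ p.U x.1 x.2.1}.image
    fun x => (rankIn p.A x.1, x.2.1, rankIn p.A x.2.2))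

theorem mem_shape_iff {p : Cond} {a b : CtblOrd} (ha : a ∈ p.A) (hb : b ∈ p.A) (i : ℕ) :
    (rankIn p.A a, i, rankIn p.A b) ∈ p.shape.2.2 ↔ b ∈ p.U a i := by
  simp only [shape, mem_image, mem_filter, mem_product, mem_range, Prod.exists, Prod.mk.injEq]
  constructor
  · rintro ⟨a', i', b', ⟨⟨ha', -, hb'⟩, hU⟩, hra, rfl, hrb⟩
    rwa [← (rankIn_strictMonoOn p.A).injOn ha' ha hra, ← (rankIn_strictMonoOn p.A).injOn hb' hb hrb]
  · intro hU
    exact ⟨a, i, b, ⟨⟨ha, (mem_A_and_lt_n_of_mem_U hU).2, hb⟩, hU⟩, rfl, rfl, rfl⟩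

section Transport

variable {p q : Cond} (h : p.shape = q.shape) {σ : CtblOrd → CtblOrd}
  (hσ : p.A.image σ = q.A) (hrank : ∀ a ∈ p.A, rankIn q.A (σ a) = rankIn p.A a)
include h hσ hrank

theorem U_map_eq {a : CtblOrd} (ha : a ∈ p.A) (i : ℕ) : q.U (σ a) i = (p.U a i).image σ := by
  have hmaps : ∀ b ∈ p.A, σ b ∈ q.A := fun b hb => hσ ▸ mem_image_of_mem σ hb
  have htransport : ∀ b ∈ p.A, σ b ∈ q.U (σ a) i ↔ b ∈ p.U a i := fun b hb => by
    rw [← mem_shape_iff (hmaps a ha) (hmaps b hb), ← mem_shape_iff ha hb, hrank a ha, hrank b hb, h]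
  ext c
  constructor
  · intro hc
    obtain ⟨b, hb, rfl⟩ := mem_image.1 (hσ ▸ mem_A_of_mem_U hc)
    exact mem_image_of_mem σ ((htransport b hb).1 hc)
  · intro hc
    obtain ⟨b, hb, rfl⟩ := mem_image.1 hc
    exact (htransport b (mem_A_of_mem_U hb)).2 hb

end Transport

theorem eq_of_shape_eq {p q : Cond} (h : p.shape = q.shape) (hA : p.A = q.A) : p = q := by
  have hn : p.n = q.n := congrArg Prod.fst h
  have hU : p.U = q.U := by
    funext a i
    by_cases ha : a ∈ p.A
    · simpa using (U_map_eq h (σ := id) (by rw [image_id, hA]) (by simp [hA]) ha i).symm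
    · rw [p.default_empty a i fun hai => ha hai.1, q.default_empty a i fun hai => ha (hA ▸ hai.1)]
  cases p; cases q
  cases hA; cases hn; cases hU
  rfl

theorem twins_of_shape_eq {p q : Cond} (h : p.shape = q.shape) (hstag : Staggered p.A q.A) :
    ∃ σ, Twins p q σ := by
  have hcard : #q.A = #p.A := (congrArg (·.2.1) h).symm
  let e : p.A ≃o q.A := (p.A.orderIsoOfFin rfl).symm.trans (q.A.orderIsoOfFin hcard)
  refine ⟨twinMap e, congrArg Prod.fst h, hcard.symm, image_twinMap e,
    fun a ha b hb => twinMap_strictMonoOn e ha hb,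
    fun δ hδ => twinMap_eq_self_of_filter_lt_eq e hδ (hstag.filter_lt_eq hδ),
    fun a ha i _ => U_map_eq h (image_twinMap e) (fun b hb => rankIn_twinMap e hb) ha i⟩

end Cond

/-- Every uncountable set `S` of conditions contains two distinct conditions `p0`, `p1` that are twins and satisfy `A0∩A1 < A0∖A1 < A1∖A0`. -/
theorem uncountable_contains_twins
    (S : Set Cond) (hS : ¬ S.Countable)
    :
    ∃ p0 ∈ S, ∃ p1 ∈ S, p0 ≠ p1 ∧ ∃ σ : CtblOrd → CtblOrd,
      Twins p0 p1 σ ∧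
      (∀ x ∈ p0.A ∩ p1.A, ∀ y ∈ p0.A \ p1.A, x < y) ∧
      (∀ y ∈ p0.A \ p1.A, ∀ z ∈ p1.A \ p0.A, y < z) := by
  obtain ⟨t, ht⟩ : ∃ t, ¬ {p ∈ S | p.shape = t}.Countable := by
    by_contra! hcount
    refine hS ((Set.countable_iUnion hcount).mono fun p hp => ?_)
    exact Set.mem_iUnion.2 ⟨p.shape, hp, rfl⟩
  set T := {p ∈ S | p.shape = t}
  have hinj : Set.InjOn Cond.A T := fun p hp q hq hA =>
    Cond.eq_of_shape_eq (hp.2.trans hq.2.symm) hA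
  have hcard : ∀ A ∈ Cond.A '' T, #A = t.2.1 := by
    rintro _ ⟨p, hp, rfl⟩
    exact congrArg (·.2.1) hp.2
  obtain ⟨_, ⟨p₀, hp₀, rfl⟩, _, ⟨p₁, hp₁, rfl⟩, hne, hstag⟩ :=
    exists_staggered_of_not_countable CtblOrd.countable_Iic hcard
      fun hc => ht (Set.countable_of_injective_of_countable_image hinj hc)
  obtain ⟨σ, hσ⟩ := Cond.twins_of_shape_eq (hp₀.2.trans hp₁.2.symm) hstag
  exact ⟨p₀, hp₀.1, p₁, hp₁.1, fun h => hne (congrArg Cond.A h), σ, hσ, hstag.1, hstag.2.2⟩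
end
end
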